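/- arXiv:2405.04144 — 2 statements merged into one kernel-verified Lean document; each statement's English description precedes it below -/
import Mathlib

section
/- Let S ~ Bern(a) and S₁ ~ Bern(p₁) be independent with a, p₁ ≤ 1/2, and let X = S ⊕ S₁ (so X ~ Bern(b) with b = (a−p₁)/(1−2p₁), taking b ≤ 1/2 WLOG). For any random variable X̂ such that S − X − X̂ forms a Markov chain, H(S|X̂) ≥ H(p₁), where H is the binary entropy function. -/
open Finset

/-- Binary entropy function (base 2). -/
noncomputable def binEnt (p : ℝ) : ℝ :=
  -(p * Real.logb 2 p) - (1 - p) * Real.logb 2 (1 - p)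

/-- Bernoulli pmf with parameter `p`. -/
noncomputable def bern (p : ℝ) : Bool → ℝ := fun b => if b then p else 1 - p

/-- Conditional (Shannon) entropy `H(B | A)` (base 2) of a joint pmf `p : B → A → ℝ`. -/
noncomputable def condEnt2 {β α : Type*} [Fintype β] [Fintype α] (p : β → α → ℝ) : ℝ :=
  ∑ a : α, ∑ b : β, -(p b a * Real.logb 2 (p b a / ∑ b' : β, p b' a))

/-!
`H(S | X̂) ≥ H(S | X, X̂) = H(S | X) = H(p₁)`. The inequality is "conditioning reduces entropy",
which is Jensen's inequality for the concave function `-x log x` in perspective form. Given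
`X = x`, the Markov chain makes `S` independent of `X̂`, so conditioning on `X̂` as well does not
change the entropy, and given `X = x` the law of `S` is `Bern(p₁)` shifted by `x`.
-/

open Real

section

variable {α β γ : Type*} [Fintype α] [Fintype β] [Fintype γ]

lemma sum_mul_negMulLog_div_le {ι : Type*} (s : Finset ι) (w x : ι → ℝ)
    (hw : ∀ i ∈ s, 0 ≤ w i) (hx : ∀ i ∈ s, 0 ≤ x i) (hxw : ∀ i ∈ s, w i = 0 → x i = 0) :
    ∑ i ∈ s, w i * negMulLog (x i / w i)
      ≤ (∑ i ∈ s, w i) * negMulLog ((∑ i ∈ s, x i) / ∑ i ∈ s, w i) := by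
  rcases (sum_nonneg hw).eq_or_lt with hW | hW
  · have hw0 : ∀ i ∈ s, w i = 0 := (sum_eq_zero_iff_of_nonneg hw).mp hW.symm
    rw [← hW, sum_eq_zero fun i hi => by rw [hw0 i hi, zero_mul], zero_mul]
  · set W := ∑ i ∈ s, w i
    have jensen := concaveOn_negMulLog.le_map_sum (t := s) (w := fun i => w i / W)
      (p := fun i => x i / w i) (fun i hi => div_nonneg (hw i hi) hW.le)
      (by rw [← sum_div, div_self hW.ne']) fun i hi => Set.mem_Ici.2 (div_nonneg (hx i hi) (hw i hi))
    have hmean : ∑ i ∈ s, (w i / W) • (x i / w i) = (∑ i ∈ s, x i) / W := by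
      rw [sum_div]
      refine sum_congr rfl fun i hi => ?_
      rcases eq_or_ne (w i) 0 with h | h
      · simp [h, hxw i hi h]
      · rw [smul_eq_mul]
        field_simp
    rw [hmean] at jensen
    calc ∑ i ∈ s, w i * negMulLog (x i / w i)
        = W * ∑ i ∈ s, (w i / W) • negMulLog (x i / w i) := by
          rw [mul_sum]
          refine sum_congr rfl fun i _ => ?_
          rw [smul_eq_mul]
          field_simp
      _ ≤ W * negMulLog ((∑ i ∈ s, x i) / W) := mul_le_mul_of_nonneg_left jensen hW.le

-- Also for `n = 0`, where both sides vanish because `x / 0 = 0`.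
lemma neg_mul_logb_div_eq (b x n : ℝ) :
    -(x * logb b (x / n)) = n * negMulLog (x / n) / log b := by
  rcases eq_or_ne n 0 with rfl | hn
  · simp
  · rw [negMulLog, logb]
    field_simp

noncomputable def ent2 (m : β → ℝ) : ℝ :=
  ∑ b, -(m b * logb 2 (m b / ∑ b', m b'))

lemma condEnt2_eq_sum_ent2 (p : β → α → ℝ) : condEnt2 p = ∑ a, ent2 fun b => p b a := rfl

lemma ent2_const_mul (c : ℝ) (m : β → ℝ) : ent2 (fun b => c * m b) = c * ent2 m := by
  rcases eq_or_ne c 0 with rfl | hc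
  · simp [ent2]
  · simp only [ent2, ← mul_sum, mul_div_mul_left _ _ hc]
    rw [mul_sum]
    exact sum_congr rfl fun b _ => by ring

lemma ent2_bern_xor (p : ℝ) (x : Bool) : ent2 (fun s => bern p (Bool.xor s x)) = binEnt p := by
  cases x <;> simp only [ent2, bern, binEnt, Fintype.sum_bool, Bool.true_xor, Bool.false_xor,
    Bool.xor_false, Bool.not_true, if_true, Bool.false_eq_true, if_false,
    sub_add_cancel, add_sub_cancel, div_one] <;> ring

theorem condEnt2_le_ent2 (Q : β → γ → ℝ) (hQ : ∀ b c, 0 ≤ Q b c) :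
    condEnt2 Q ≤ ent2 fun b => ∑ c, Q b c := by
  have htotal : ∑ c, ∑ b', Q b' c = ∑ b', ∑ c, Q b' c := sum_comm
  simp only [condEnt2, ent2, neg_mul_logb_div_eq]
  rw [sum_comm]
  gcongr with b
  rw [← sum_div, ← htotal]
  gcongr
  refine sum_mul_negMulLog_div_le _ _ _ (fun c _ => sum_nonneg fun b' _ => hQ b' c)
    (fun c _ => hQ b c) fun c _ hc => ?_
  exact (sum_eq_zero_iff_of_nonneg fun b' _ => hQ b' c).mp hc b (mem_univ b)

theorem condEnt2_eq_ent2_of_indep (q : β → α → ℝ) (hq : ∀ b a, 0 ≤ q b a)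
    (hindep : ∀ b a, q b a * ∑ b', ∑ a', q b' a' = (∑ a', q b a') * ∑ b', q b' a) :
    condEnt2 q = ent2 fun b => ∑ a, q b a := by
  set T := ∑ b', ∑ a', q b' a'
  rcases (sum_nonneg fun b _ => sum_nonneg fun a _ => hq b a : 0 ≤ T).eq_or_lt with hT | hT
  · have hzero : ∀ b a, q b a = 0 := fun b a =>
      (sum_eq_zero_iff_of_nonneg fun a _ => hq b a).mp
        ((sum_eq_zero_iff_of_nonneg fun b _ => sum_nonneg fun a _ => hq b a).mp hT.symm b
          (mem_univ b)) a (mem_univ a)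
    simp [condEnt2, ent2, hzero]
  · have hfactor : ∀ a, (fun b => q b a) = fun b => (∑ b', q b' a) / T * ∑ a', q b a' :=
      fun a => funext fun b => by
        rw [div_mul_eq_mul_div, eq_div_iff hT.ne', hindep, mul_comm]
    have hmass : ∑ a, (∑ b', q b' a) / T = 1 := by
      rw [← sum_div, sum_comm, div_self hT.ne']
    rw [condEnt2_eq_sum_ent2]
    calc ∑ a, ent2 (fun b => q b a) = ∑ a, (∑ b', q b' a) / T * ent2 (fun b => ∑ a', q b a') :=
          sum_congr rfl fun a _ => by rw [← ent2_const_mul, ← hfactor a]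
      _ = ent2 fun b => ∑ a, q b a := by rw [← sum_mul, hmass, one_mul]

end

theorem stmt0_general {α : Type*} [Fintype α] (a p₁ : ℝ)
    (q : Bool → Bool → α → ℝ)
    (hq0 : ∀ s x xh, 0 ≤ q s x xh)
    -- joint of (S, X):  `S ~ Bern(a)`, `X ~ Bern(b)`, `S = X ⊕ S₁` with `S₁ ~ Bern(p₁)`
    (hSX : ∀ s x, ∑ xh : α, q s x xh
        = bern ((a - p₁) / (1 - 2 * p₁)) x * bern p₁ (Bool.xor s x))
    -- Markov chain S - X - X̂
    (hmarkov : ∀ s x xh,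
        q s x xh * (∑ s' : Bool, ∑ xh' : α, q s' x xh')
          = (∑ xh' : α, q s x xh') * (∑ s' : Bool, q s' x xh)) :
    binEnt p₁ ≤ condEnt2 (fun s xh => ∑ x : Bool, q s x xh) := by
  have hS_given_X : ∀ x, ent2 (fun s => ∑ xh, q s x xh)
      = bern ((a - p₁) / (1 - 2 * p₁)) x * binEnt p₁ := fun x => by
    simp only [hSX, ent2_const_mul, ent2_bern_xor]
  calc binEnt p₁ = ∑ x, ent2 (fun s => ∑ xh, q s x xh) := by
        simp only [hS_given_X, Fintype.sum_bool, bern, if_true, Bool.false_eq_true, if_false]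
        ring
    _ = ∑ x, condEnt2 (fun s xh => q s x xh) := sum_congr rfl fun x _ =>
        (condEnt2_eq_ent2_of_indep _ (fun s xh => hq0 s x xh) fun s xh => hmarkov s x xh).symm
    _ = ∑ xh, condEnt2 (fun s x => q s x xh) := by
        simp only [condEnt2_eq_sum_ent2]
        exact sum_comm
    _ ≤ condEnt2 (fun s xh => ∑ x, q s x xh) :=
        sum_le_sum fun xh _ => condEnt2_le_ent2 _ fun s x => hq0 s x xh

/-- For the binary symmetric source `S ~ Bern(a)`, `S₁ ~ Bern(p₁)` with
`X = S ⊕ S₁`, so that `X ~ Bern(b)` with `b = (a - p₁)/(1 - 2p₁)` and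
`P(S = s, X = x) = bern b x * bern p₁ (s ⊕ x)`, any `X̂` forming the Markov chain
`S - X - X̂` satisfies `H(S | X̂) ≥ H(p₁)`, where `q` is the joint pmf of `(S, X, X̂)`. -/
theorem stmt0 {α : Type*} [Fintype α] (a p₁ : ℝ)
    (ha0 : 0 ≤ a) (ha : a ≤ 1 / 2) (hp0 : 0 ≤ p₁) (hp : p₁ ≤ 1 / 2)
    (q : Bool → Bool → α → ℝ)
    (hq0 : ∀ s x xh, 0 ≤ q s x xh)
    -- joint of (S, X):  `S ~ Bern(a)`, `X ~ Bern(b)`, `S = X ⊕ S₁` with `S₁ ~ Bern(p₁)`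
    (hSX : ∀ s x, ∑ xh : α, q s x xh
        = bern ((a - p₁) / (1 - 2 * p₁)) x * bern p₁ (Bool.xor s x))
    -- Markov chain S - X - X̂
    (hmarkov : ∀ s x xh,
        q s x xh * (∑ s' : Bool, ∑ xh' : α, q s' x xh')
          = (∑ xh' : α, q s x xh') * (∑ s' : Bool, q s' x xh)) :
    binEnt p₁ ≤ condEnt2 (fun s xh => ∑ x : Bool, q s x xh) :=
  stmt0_general a p₁ q hq0 hSX hmarkov
end

section
/- Let S ~ Bern(a), S₁ ~ Bern(p₁) independent with a, p₁ ≤ 1/2, X = S ⊕ S₁, b = min{(a−p₁)/(1−2p₁), 1−(a−p₁)/(1−2p₁)}. For C with H(p₁) ≤ C, define C₁ = (H⁻¹(C)−p₁)/(1−2p₁), where H⁻¹: [0,1] → [0,1/2] is the inverse of binary entropy. Then the infimum of I(X; X̂) over all conditional distributions p(X̂|X) satisfying E[𝟙{X ≠ X̂}] ≤ D and H(S|X̂) ≤ C equals: H(b) − H(C₁) if D ≥ C₁ and C₁ ≤ b; H(b) − H(D) if D < C₁ and D ≤ b; and 0 if min{D, C₁} > b. -/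
open Finset

/-- Mutual information `I(X; X̂)` (base 2) of a joint pmf on `Bool × Bool`. -/
noncomputable def mi2 (p : Bool → Bool → ℝ) : ℝ :=
  ∑ x : Bool, ∑ y : Bool,
    p x y * Real.logb 2 (p x y / ((∑ y' : Bool, p x y') * ∑ x' : Bool, p x' y))

/-!
Write `w y = P(X̂ = y)` and `α y = P(X = 1 | X̂ = y)`. Because `S - X - X̂` is Markov,
`P(S = 1 | X̂ = y) = p₁ ⋆ α y`, so the rate is `H(b) - ∑ w H(α)`, the distortion is
`w 0 α 0 + w 1 (1 - α 1)` and the classification loss is `∑ w H(p₁ ⋆ α)`. Concavity of `H`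
gives `∑ w H(α) ≤ H(b)` and `∑ w H(α) ≤ H(D)`; Mrs. Gerber's lemma (`H(p₁ ⋆ H⁻¹(·))` is convex)
gives `∑ w H(α) ≤ H(C₁)`. The backward test channel `X = X̂ ⊕ Bern d` attains each bound, with
`d = C₁`, `D` or `b`.

Mrs. Gerber's lemma follows from Cauchy's mean value theorem once the ratio of derivatives
`(1 - 2p) log((1 - ℓ)/ℓ) / log((1 - t)/t)`, `ℓ = p ⋆ t`, is shown to increase in `t`; this
reduces to the monotonicity of `t (1 - t) log((1 - t)/t) / (1 - 2t)` on `(0, 1/2)`, i.e. to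
`log v ≥ 2 (v - 1)/(v + 1)`.
-/

open Real Set

lemma binEnt_eq_binEntropy_div (p : ℝ) : binEnt p = binEntropy p / log 2 := by
  unfold binEnt binEntropy logb
  rw [log_inv, log_inv]
  ring

lemma binEnt_one_sub (p : ℝ) : binEnt (1 - p) = binEnt p := by
  rw [binEnt_eq_binEntropy_div, binEnt_eq_binEntropy_div, binEntropy_one_sub]

lemma binEntropy_strictMonoOn_Icc_half : StrictMonoOn binEntropy (Icc 0 (1 / 2)) := by
  simpa only [one_div] using binEntropy_strictMonoOn

lemma binEnt_strictMonoOn : StrictMonoOn binEnt (Icc 0 (1 / 2)) := fun x hx y hy hxy => by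
  rw [binEnt_eq_binEntropy_div, binEnt_eq_binEntropy_div]
  exact div_lt_div_of_pos_right (binEntropy_strictMonoOn_Icc_half hx hy hxy)
    (log_pos one_lt_two)

lemma sum_mul_binEnt {ι : Type*} (s : Finset ι) (w α : ι → ℝ) :
    ∑ i ∈ s, w i * binEnt (α i) = (∑ i ∈ s, w i * binEntropy (α i)) / log 2 := by
  simp only [binEnt_eq_binEntropy_div, mul_div_assoc', Finset.sum_div]

lemma sum_mul_binEnt_le {ι : Type*} {s : Finset ι} {w α : ι → ℝ} (hw : ∀ i ∈ s, 0 ≤ w i)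
    (hw₁ : ∑ i ∈ s, w i = 1) (hα : ∀ i ∈ s, α i ∈ Icc (0 : ℝ) 1) :
    ∑ i ∈ s, w i * binEnt (α i) ≤ binEnt (∑ i ∈ s, w i * α i) := by
  rw [sum_mul_binEnt, binEnt_eq_binEntropy_div]
  gcongr
  simpa only [smul_eq_mul] using strictConcave_binEntropy.concaveOn.le_map_sum hw hw₁ hα

/-- `p ⋆ t`: the parameter of `B ⊕ B'` for independent `B ~ Bern p`, `B' ~ Bern t`. -/
def binConv (p t : ℝ) : ℝ := p * (1 - t) + (1 - p) * t

lemma binConv_one_sub (p t : ℝ) : binConv p (1 - t) = 1 - binConv p t := by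
  unfold binConv; ring

lemma one_sub_two_mul_binConv (p t : ℝ) :
    1 - 2 * binConv p t = (1 - 2 * p) * (1 - 2 * t) := by
  unfold binConv; ring

lemma hasDerivAt_binConv (p t : ℝ) : HasDerivAt (binConv p) (1 - 2 * p) t := by
  have hlin : binConv p = fun u => p + (1 - 2 * p) * u := by ext u; unfold binConv; ring
  simpa [hlin] using ((hasDerivAt_id t).const_mul (1 - 2 * p)).const_add p

lemma le_binConv {p t : ℝ} (hp₀ : 0 ≤ p) (ht : t ≤ 1 / 2) : t ≤ binConv p t := by
  unfold binConv; nlinarith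

lemma binConv_lt_half {p t : ℝ} (hp : p < 1 / 2) (ht : t < 1 / 2) : binConv p t < 1 / 2 := by
  nlinarith [one_sub_two_mul_binConv p t]

lemma binConv_le_half {p t : ℝ} (hp : p ≤ 1 / 2) (ht : t ≤ 1 / 2) : binConv p t ≤ 1 / 2 := by
  nlinarith [one_sub_two_mul_binConv p t]

lemma continuous_binConv (p : ℝ) : Continuous (binConv p) := by
  unfold binConv; fun_prop

lemma binConv_sub_div {p : ℝ} (hp : 1 - 2 * p ≠ 0) (u : ℝ) :
    binConv p ((u - p) / (1 - 2 * p)) = u := by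
  unfold binConv
  linear_combination div_mul_cancel₀ (u - p) hp

lemma binConv_mem_Icc {p t : ℝ} (hp₀ : 0 ≤ p) (hp : p ≤ 1 / 2) (ht : t ∈ Icc (0 : ℝ) (1 / 2)) :
    binConv p t ∈ Icc (0 : ℝ) (1 / 2) :=
  ⟨ht.1.trans (le_binConv hp₀ ht.2), binConv_le_half hp ht.2⟩

lemma binConv_le_binConv_iff {p s t : ℝ} (hp : p < 1 / 2) :
    binConv p s ≤ binConv p t ↔ s ≤ t := by
  unfold binConv
  constructor <;> intro h <;> nlinarith

lemma sub_div_mem_Icc {p u : ℝ} (hp : p < 1 / 2) (hpu : p ≤ u) (hu : u ≤ 1 / 2) :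
    (u - p) / (1 - 2 * p) ∈ Icc (0 : ℝ) (1 / 2) :=
  ⟨div_nonneg (by linarith) (by linarith), by rw [div_le_iff₀ (by linarith)]; linarith⟩

lemma binEnt_binConv_le_binEnt_binConv {p s t : ℝ} (hp₀ : 0 ≤ p) (hp : p < 1 / 2) (hs : 0 ≤ s)
    (hst : s ≤ t) (ht : t ≤ 1 / 2) : binEnt (binConv p s) ≤ binEnt (binConv p t) :=
  binEnt_strictMonoOn.monotoneOn (binConv_mem_Icc hp₀ hp.le ⟨hs, hst.trans ht⟩)
    (binConv_mem_Icc hp₀ hp.le ⟨hs.trans hst, ht⟩) ((binConv_le_binConv_iff hp).2 hst)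

lemma monotoneOn_Ioo_of_hasDerivAt_nonneg {f f' : ℝ → ℝ} {a b : ℝ}
    (hf : ∀ x ∈ Ioo a b, HasDerivAt f (f' x) x) (hf' : ∀ x ∈ Ioo a b, 0 ≤ f' x) :
    MonotoneOn f (Ioo a b) :=
  monotoneOn_of_hasDerivWithinAt_nonneg (convex_Ioo a b)
    (fun x hx => (hf x hx).continuousAt.continuousWithinAt)
    (by simpa using fun x hx => (hf x hx).hasDerivWithinAt) (by simpa using hf')

lemma hasDerivAt_log_one_sub_sub_log {t : ℝ} (ht₀ : 0 < t) (ht₁ : t < 1) :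
    HasDerivAt (fun t => log (1 - t) - log t) (-(t * (1 - t))⁻¹) t := by
  refine ((((hasDerivAt_id t).const_sub 1).log (by simp; linarith)).fun_sub
    ((hasDerivAt_id t).log ht₀.ne')).congr_deriv ?_
  have : (1 : ℝ) - t ≠ 0 := by linarith
  simp only [id]
  field_simp
  ring

lemma log_one_sub_sub_log_pos {t : ℝ} (ht₀ : 0 < t) (ht : t < 1 / 2) :
    0 < log (1 - t) - log t :=
  sub_pos.2 (log_lt_log ht₀ (by linarith))

/-- This is `2 (v - 1) / (v + 1) ≤ log v` at `v = ((1 - t) / t) ^ 2`. -/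
lemma one_sub_two_mul_le_mul_log_one_sub_sub_log {t : ℝ} (ht₀ : 0 < t) (ht : t ≤ 1 / 2) :
    1 - 2 * t ≤ (2 * t ^ 2 - 2 * t + 1) * (log (1 - t) - log t) := by
  have ht₁ : 0 < 1 - t := by linarith
  have hv : 0 ≤ ((1 - t) / t) ^ 2 - 1 := by
    rw [sub_nonneg, one_le_sq_iff_one_le_abs, abs_of_pos (by positivity), one_le_div ht₀]
    linarith
  have h := le_log_one_add_of_nonneg hv
  rw [add_sub_cancel, log_pow, log_div ht₁.ne' ht₀.ne', div_le_iff₀ (by positivity)] at h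
  have e : (((1 - t) / t) ^ 2 - 1 + 2) * t ^ 2 = 2 * t ^ 2 - 2 * t + 1 := by field_simp; ring
  have e' : (((1 - t) / t) ^ 2 - 1) * t ^ 2 = 1 - 2 * t := by field_simp; ring
  linear_combination (t ^ 2 / 2) * h - e' + (log (1 - t) - log t) * e

lemma monotoneOn_mul_log_one_sub_sub_log_div :
    MonotoneOn (fun t => t * (1 - t) * (log (1 - t) - log t) / (1 - 2 * t)) (Ioo 0 (1 / 2)) := by
  refine monotoneOn_Ioo_of_hasDerivAt_nonneg
    (f' := fun t => ((2 * t ^ 2 - 2 * t + 1) * (log (1 - t) - log t) - (1 - 2 * t))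
      / (1 - 2 * t) ^ 2) (fun t ⟨ht₀, ht⟩ => ?_) (fun t ⟨ht₀, ht⟩ => ?_)
  · refine ((((hasDerivAt_id t).fun_mul ((hasDerivAt_id t).const_sub 1)).fun_mul
      (hasDerivAt_log_one_sub_sub_log ht₀ (by linarith))).fun_div
      (((hasDerivAt_id t).const_mul 2).const_sub 1) (by simp; linarith)).congr_deriv ?_
    have : (1 : ℝ) - t ≠ 0 := by linarith
    simp only [id]
    field_simp
    ring
  · exact div_nonneg (sub_nonneg.2 (one_sub_two_mul_le_mul_log_one_sub_sub_log ht₀ ht.le))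
      (sq_nonneg _)

lemma mul_mul_log_one_sub_sub_log_le_binConv {p t : ℝ} (hp₀ : 0 ≤ p) (hp : p < 1 / 2)
    (ht₀ : 0 < t) (ht : t < 1 / 2) :
    (1 - 2 * p) * (t * (1 - t) * (log (1 - t) - log t))
      ≤ binConv p t * (1 - binConv p t) * (log (1 - binConv p t) - log (binConv p t)) := by
  have hℓ := le_binConv hp₀ ht.le
  have h := monotoneOn_mul_log_one_sub_sub_log_div ⟨ht₀, ht⟩
    ⟨ht₀.trans_le hℓ, binConv_lt_half hp ht⟩ hℓ
  simp only at h
  have ht₂ : 0 < 1 - 2 * t := by linarith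
  calc (1 - 2 * p) * (t * (1 - t) * (log (1 - t) - log t))
      = (1 - 2 * binConv p t) * (t * (1 - t) * (log (1 - t) - log t) / (1 - 2 * t)) := by
        rw [one_sub_two_mul_binConv]; field_simp
    _ ≤ (1 - 2 * binConv p t) * (binConv p t * (1 - binConv p t)
          * (log (1 - binConv p t) - log (binConv p t)) / (1 - 2 * binConv p t)) :=
        mul_le_mul_of_nonneg_left h (by linarith [binConv_lt_half hp ht])
    _ = _ := mul_div_cancel₀ _ (by linarith [binConv_lt_half hp ht])

lemma monotoneOn_log_binConv_div {p : ℝ} (hp₀ : 0 ≤ p) (hp : p < 1 / 2) :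
    MonotoneOn (fun t => (log (1 - binConv p t) - log (binConv p t)) / (log (1 - t) - log t))
      (Ioo 0 (1 / 2)) := by
  refine monotoneOn_Ioo_of_hasDerivAt_nonneg (fun t ⟨ht₀, ht⟩ =>
    (((hasDerivAt_log_one_sub_sub_log (ht₀.trans_le (le_binConv hp₀ ht.le))
        (by linarith [binConv_lt_half hp ht])).comp t (hasDerivAt_binConv p t)).fun_div
      (hasDerivAt_log_one_sub_sub_log ht₀ (by linarith))
      (log_one_sub_sub_log_pos ht₀ ht).ne')) (fun t ⟨ht₀, ht⟩ => ?_)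
  set ℓ := binConv p t
  have hℓ₀ : 0 < ℓ := ht₀.trans_le (le_binConv hp₀ ht.le)
  have hℓ₁ : 0 < 1 - ℓ := by linarith [binConv_lt_half hp ht]
  have ht₁ : 0 < 1 - t := by linarith
  have key : (-(ℓ * (1 - ℓ))⁻¹ * (1 - 2 * p)) * (log (1 - t) - log t)
      - (log (1 - ℓ) - log ℓ) * -(t * (1 - t))⁻¹
      = (ℓ * (1 - ℓ) * (log (1 - ℓ) - log ℓ) - (1 - 2 * p) * (t * (1 - t) * (log (1 - t) - log t)))
        / (ℓ * (1 - ℓ) * (t * (1 - t))) := by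
    field_simp
    ring
  refine div_nonneg ?_ (sq_nonneg _)
  simp only [Function.comp_apply]
  rw [key]
  exact div_nonneg (sub_nonneg.2 (mul_mul_log_one_sub_sub_log_le_binConv hp₀ hp ht₀ ht))
    (by positivity)

/-- Three-slope inequality for `f` against `g`: `f` is convex as a function of `g` when
`f' / g'` is monotone. -/
lemma sub_mul_sub_le_of_monotoneOn_div {f g f' g' : ℝ → ℝ} {x z y : ℝ} (hxz : x ≤ z)
    (hzy : z ≤ y) (hf : ContinuousOn f (Icc x y)) (hg : ContinuousOn g (Icc x y))
    (hf' : ∀ t ∈ Ioo x y, HasDerivAt f (f' t) t) (hg' : ∀ t ∈ Ioo x y, HasDerivAt g (g' t) t)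
    (hg'_pos : ∀ t ∈ Ioo x y, 0 < g' t) (hmono : MonotoneOn (fun t => f' t / g' t) (Ioo x y)) :
    (f z - f x) * (g y - g z) ≤ (f y - f z) * (g z - g x) := by
  rcases hxz.eq_or_lt with rfl | hxz
  · simp
  rcases hzy.eq_or_lt with rfl | hzy
  · simp
  have hg_mono : MonotoneOn g (Icc x y) :=
    (strictMonoOn_of_hasDerivWithinAt_pos (convex_Icc x y) hg
      (by simpa using fun t ht => (hg' t ht).hasDerivWithinAt) (by simpa using hg'_pos)).monotoneOn
  have hxy := hxz.trans hzy
  have hx : x ∈ Icc x y := left_mem_Icc.2 hxy.le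
  have hy : y ∈ Icc x y := right_mem_Icc.2 hxy.le
  have hz : z ∈ Icc x y := ⟨hxz.le, hzy.le⟩
  obtain ⟨c₁, hc₁, h₁⟩ := exists_ratio_hasDerivAt_eq_ratio_slope f f' hxz
    (hf.mono (Icc_subset_Icc_right hzy.le)) (fun t ht => hf' t ⟨ht.1, ht.2.trans hzy⟩) g g'
    (hg.mono (Icc_subset_Icc_right hzy.le)) (fun t ht => hg' t ⟨ht.1, ht.2.trans hzy⟩)
  obtain ⟨c₂, hc₂, h₂⟩ := exists_ratio_hasDerivAt_eq_ratio_slope f f' hzy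
    (hf.mono (Icc_subset_Icc_left hxz.le)) (fun t ht => hf' t ⟨hxz.trans ht.1, ht.2⟩) g g'
    (hg.mono (Icc_subset_Icc_left hxz.le)) (fun t ht => hg' t ⟨hxz.trans ht.1, ht.2⟩)
  have hc₁' : c₁ ∈ Ioo x y := ⟨hc₁.1, hc₁.2.trans hzy⟩
  have hc₂' : c₂ ∈ Ioo x y := ⟨hxz.trans hc₂.1, hc₂.2⟩
  have e₁ : f z - f x = (g z - g x) * (f' c₁ / g' c₁) := by
    field_simp [(hg'_pos c₁ hc₁').ne']; linarith
  have e₂ : f y - f z = (g y - g z) * (f' c₂ / g' c₂) := by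
    field_simp [(hg'_pos c₂ hc₂').ne']; linarith
  have hr := hmono hc₁' hc₂' (hc₁.2.trans hc₂.1).le
  have hgxz : 0 ≤ g z - g x := sub_nonneg.2 (hg_mono hx hz hxz.le)
  have hgzy : 0 ≤ g y - g z := sub_nonneg.2 (hg_mono hz hy hzy.le)
  rw [e₁, e₂]
  nlinarith [mul_nonneg hgxz hgzy]

lemma binEntropy_binConv_chord {p x z y : ℝ} (hp₀ : 0 ≤ p) (hp : p < 1 / 2) (hx : 0 ≤ x)
    (hxz : x ≤ z) (hzy : z ≤ y) (hy : y ≤ 1 / 2) :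
    (binEntropy (binConv p z) - binEntropy (binConv p x)) * (binEntropy y - binEntropy z)
      ≤ (binEntropy (binConv p y) - binEntropy (binConv p z)) * (binEntropy z - binEntropy x) := by
  have hI : ∀ t ∈ Ioo x y, 0 < t ∧ t < 1 / 2 := fun t ht =>
    ⟨hx.trans_lt ht.1, ht.2.trans_le hy⟩
  refine sub_mul_sub_le_of_monotoneOn_div hxz hzy
    (f' := fun t => (log (1 - binConv p t) - log (binConv p t)) * (1 - 2 * p))
    (g' := fun t => log (1 - t) - log t)
    (binEntropy_continuous.comp (continuous_binConv p)).continuousOn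
    binEntropy_continuous.continuousOn (fun t ht => ?_) (fun t ht => ?_) (fun t ht => ?_) ?_
  · obtain ⟨ht₀, ht⟩ := hI t ht
    have hℓ₀ := ht₀.trans_le (le_binConv hp₀ ht.le)
    exact (hasDerivAt_binEntropy hℓ₀.ne' (by linarith [binConv_lt_half hp ht])).comp t
      (hasDerivAt_binConv p t)
  · obtain ⟨ht₀, ht⟩ := hI t ht
    exact hasDerivAt_binEntropy ht₀.ne' (by linarith)
  · obtain ⟨ht₀, ht⟩ := hI t ht
    exact log_one_sub_sub_log_pos ht₀ ht
  · intro s hs t ht hst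
    have h := monotoneOn_log_binConv_div hp₀ hp (hI s hs) (hI t ht) hst
    simp only [mul_div_right_comm _ (1 - 2 * p)]
    exact mul_le_mul_of_nonneg_right h (by linarith)

/-- Mrs. Gerber's lemma, for a mixture of two points. -/
lemma binEntropy_binConv_le_of_binEntropy_eq {p x y z w₁ w₂ : ℝ} (hp₀ : 0 ≤ p) (hp : p < 1 / 2)
    (hx : x ∈ Icc (0 : ℝ) (1 / 2)) (hy : y ∈ Icc (0 : ℝ) (1 / 2)) (hz : z ∈ Icc (0 : ℝ) (1 / 2))
    (hw₁ : 0 ≤ w₁) (hw₂ : 0 ≤ w₂) (hw : w₁ + w₂ = 1)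
    (hHz : binEntropy z = w₁ * binEntropy x + w₂ * binEntropy y) :
    binEntropy (binConv p z)
      ≤ w₁ * binEntropy (binConv p x) + w₂ * binEntropy (binConv p y) := by
  wlog hxy : x ≤ y generalizing x y w₁ w₂
  · linarith [this hy hx hw₂ hw₁ (by linarith) (by linarith) (le_of_not_ge hxy)]
  obtain rfl : w₂ = 1 - w₁ := by linarith
  have hH := binEntropy_strictMonoOn_Icc_half
  rcases hxy.eq_or_lt with rfl | hxy
  · obtain rfl : z = x := hH.injOn hz hx (by rw [hHz]; ring)
    exact le_of_eq (by ring)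
  have hHxy : binEntropy x < binEntropy y := hH hx hy hxy
  have hxz : x ≤ z := (hH.le_iff_le hx hz).1 (by rw [hHz]; nlinarith)
  have hzy : z ≤ y := (hH.le_iff_le hz hy).1 (by rw [hHz]; nlinarith)
  have chord := binEntropy_binConv_chord hp₀ hp hx.1 hxz hzy hy.2
  rw [hHz] at chord
  refine le_of_mul_le_mul_left ?_ (sub_pos.2 hHxy)
  linear_combination chord

lemma exists_mem_Icc_binEntropy_eq {h : ℝ} (h₀ : 0 ≤ h) (h₁ : h ≤ log 2) :
    ∃ z ∈ Icc (0 : ℝ) (1 / 2), binEntropy z = h :=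
  intermediate_value_Icc (by norm_num) binEntropy_continuous.continuousOn
    ⟨by rwa [binEntropy_zero], by rwa [one_div, binEntropy_two_inv]⟩

lemma sum_mul_binEntropy_le_of_binConv {p c : ℝ} (hp₀ : 0 ≤ p) (hp : p < 1 / 2)
    {w α : Bool → ℝ} (hw : ∀ y, 0 ≤ w y) (hw₁ : ∑ y, w y = 1) (hα : ∀ y, α y ∈ Icc (0 : ℝ) 1)
    (hc : c ∈ Icc (0 : ℝ) (1 / 2))
    (h : ∑ y, w y * binEntropy (binConv p (α y)) ≤ binEntropy (binConv p c)) :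
    ∑ y, w y * binEntropy (α y) ≤ binEntropy c := by
  -- `H` and `H (p ⋆ ·)` are symmetric about `1/2`, so the `α y` may be folded into `[0, 1/2]`
  set β : Bool → ℝ := fun y => min (α y) (1 - α y)
  have hβ : ∀ y, β y ∈ Icc (0 : ℝ) (1 / 2) := fun y =>
    ⟨le_min (hα y).1 (sub_nonneg.2 (hα y).2), min_le_iff.2 <| by
      rcases le_total (α y) (1 / 2) with h | h
      exacts [.inl h, .inr (by linarith)]⟩
  have hHβ : ∀ y, binEntropy (β y) = binEntropy (α y) ∧
      binEntropy (binConv p (β y)) = binEntropy (binConv p (α y)) := fun y => by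
    rcases min_choice (α y) (1 - α y) with hy | hy <;> simp [β, hy, binConv_one_sub]
  simp only [← fun y => (hHβ y).1, ← fun y => (hHβ y).2] at h ⊢
  -- `z = H⁻¹ (∑ w H(β))`
  obtain ⟨z, hz, hHz⟩ := exists_mem_Icc_binEntropy_eq
    (Finset.sum_nonneg fun y _ =>
      mul_nonneg (hw y) (binEntropy_nonneg (hβ y).1 (by linarith [(hβ y).2])))
    (by rw [← one_mul (log 2), ← hw₁, Finset.sum_mul]
        exact Finset.sum_le_sum fun y _ => mul_le_mul_of_nonneg_left binEntropy_le_log_two (hw y))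
  rw [Fintype.sum_bool] at hw₁ hHz h
  have hmgl := binEntropy_binConv_le_of_binEntropy_eq hp₀ hp (hβ true) (hβ false) hz
    (hw true) (hw false) hw₁ hHz
  have hzc : z ≤ c := (binConv_le_binConv_iff hp).1 <|
    (binEntropy_strictMonoOn_Icc_half.le_iff_le (binConv_mem_Icc hp₀ hp.le hz)
      (binConv_mem_Icc hp₀ hp.le hc)).1 (hmgl.trans h)
  rw [Fintype.sum_bool, ← hHz]
  exact binEntropy_strictMonoOn_Icc_half.monotoneOn hz hc hzc

lemma mul_logb_div_mul_eq {b m r c : ℝ} (hm : 0 ≤ m) (hr : m ≤ r) (hc : m ≤ c) :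
    m * logb b (m / (r * c)) = m * logb b (m / c) - m * logb b r := by
  rcases hm.eq_or_lt with rfl | hm
  · simp
  rw [logb_div hm.ne' (by nlinarith), logb_mul (by linarith) (by linarith),
    logb_div hm.ne' (by linarith)]
  ring

lemma neg_mul_logb_sub_mul_logb_eq_mul_binEnt {u v w c : ℝ} (hu : 0 ≤ u) (hv : 0 ≤ v)
    (huv : u + v = w) (hvc : v = w * c) :
    -(u * logb 2 (u / w)) - v * logb 2 (v / w) = w * binEnt c := by
  rcases eq_or_ne w 0 with rfl | hw
  · obtain rfl : u = 0 := by linarith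
    obtain rfl : v = 0 := by linarith
    simp
  have hu' : u = w * (1 - c) := by linarith
  rw [hu', hvc, mul_div_cancel_left₀ _ hw, mul_div_cancel_left₀ _ hw, binEnt]
  ring

lemma condEnt2_eq_sum_mul_binEnt {n : Bool → Bool → ℝ} {w c : Bool → ℝ}
    (hn : ∀ s y, 0 ≤ n s y) (hw : ∀ y, ∑ s, n s y = w y) (hc : ∀ y, n true y = w y * c y) :
    condEnt2 n = ∑ y, w y * binEnt (c y) := by
  refine Finset.sum_congr rfl fun y _ => ?_
  have hwy := hw y
  rw [Fintype.sum_bool] at hwy ⊢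
  rw [hw y, ← neg_mul_logb_sub_mul_logb_eq_mul_binEnt (hn false y) (hn true y) (by linarith) (hc y)]
  ring

lemma mi2_eq_binEnt_sub_condEnt2 {m : Bool → Bool → ℝ} {t : ℝ} (hm : ∀ x y, 0 ≤ m x y)
    (h₁ : ∑ y, m true y = t) (h₀ : ∑ y, m false y = 1 - t) :
    mi2 m = binEnt t - condEnt2 m := by
  have hsplit : ∀ x y, m x y * logb 2 (m x y / ((∑ y', m x y') * ∑ x', m x' y))
      = m x y * logb 2 (m x y / ∑ x', m x' y) - m x y * logb 2 (∑ y', m x y') := fun x y =>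
    mul_logb_div_mul_eq (hm x y)
      (Finset.single_le_sum (fun y' _ => hm x y') (Finset.mem_univ y))
      (Finset.single_le_sum (f := fun x' => m x' y) (fun x' _ => hm x' y) (Finset.mem_univ x))
  unfold mi2 condEnt2
  simp only [hsplit, Finset.sum_sub_distrib, ← Finset.sum_mul, Finset.sum_neg_distrib]
  rw [Finset.sum_comm, Fintype.sum_bool (fun x => (∑ y, m x y) * _), h₁, h₀, binEnt]
  ring

lemma bern_nonneg {p : ℝ} (hp : p ∈ Icc (0 : ℝ) 1) (b : Bool) : 0 ≤ bern p b := by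
  cases b <;> simp [bern, hp.1, hp.2]

lemma sum_bern (p : ℝ) : ∑ b, bern p b = 1 := by
  simp [bern]

lemma sum_bern_xor (p : ℝ) (x : Bool) : ∑ s, bern p (Bool.xor s x) = 1 := by
  cases x <;> simp [bern]

/-- `q s x x̂` is a joint law of `(S, X, X̂)` with `(S, X)` distributed as in the source model
(`X ~ Bern b0`, `S = X ⊕ Bern p`) and `S - X - X̂` Markov. -/
structure IsMarkovJoint (p b0 : ℝ) (q : Bool → Bool → Bool → ℝ) : Prop where
  nonneg : ∀ s x xh, 0 ≤ q s x xh
  marginal : ∀ s x, ∑ xh : Bool, q s x xh = bern b0 x * bern p (Bool.xor s x)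
  markov : ∀ s x xh, q s x xh * (∑ s' : Bool, ∑ xh' : Bool, q s' x xh')
    = (∑ xh' : Bool, q s x xh') * (∑ s' : Bool, q s' x xh)

lemma isMarkovJoint_bern_mul {p b0 : ℝ} {m : Bool → Bool → ℝ} (hp : p ∈ Icc (0 : ℝ) 1)
    (hm : ∀ x y, 0 ≤ m x y) (hrow : ∀ x, ∑ y, m x y = bern b0 x) :
    IsMarkovJoint p b0 fun s x y => bern p (Bool.xor s x) * m x y where
  nonneg s x y := mul_nonneg (bern_nonneg hp _) (hm x y)
  marginal s x := by rw [← Finset.mul_sum, hrow, mul_comm]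
  markov s x y := by
    simp only [← Finset.mul_sum, ← Finset.sum_mul, hrow, sum_bern_xor]
    ring

namespace IsMarkovJoint

variable {p b0 : ℝ} {q : Bool → Bool → Bool → ℝ}

lemma sum_sum_eq (hq : IsMarkovJoint p b0 q) (x : Bool) :
    ∑ s, ∑ y, q s x y = bern b0 x := by
  simp only [hq.marginal, ← Finset.mul_sum, sum_bern_xor, mul_one]

lemma eq_bern_mul (hq : IsMarkovJoint p b0 q) (s x y : Bool) :
    q s x y = bern p (Bool.xor s x) * ∑ s', q s' x y := by
  have h := hq.markov s x y
  rw [hq.sum_sum_eq, hq.marginal] at h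
  rcases eq_or_ne (bern b0 x) 0 with h0 | h0
  · have hrow : ∀ s y, q s x y = 0 := fun s y =>
      (Finset.sum_eq_zero_iff_of_nonneg fun y _ => hq.nonneg s x y).1
        (by rw [hq.marginal, h0, zero_mul]) y (Finset.mem_univ y)
    simp [hrow]
  · exact mul_right_cancel₀ h0 (by linarith)

variable {w α : Bool → ℝ}

lemma sum_weight_eq_one (hq : IsMarkovJoint p b0 q) (hw : ∀ y, ∑ x, ∑ s, q s x y = w y) :
    ∑ y, w y = 1 := by
  calc ∑ y, w y = ∑ x, ∑ s, ∑ y, q s x y := by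
        simp only [← hw]
        rw [Finset.sum_comm]
        exact Finset.sum_congr rfl fun x _ => Finset.sum_comm
    _ = 1 := by simp only [hq.sum_sum_eq, sum_bern]

lemma sum_weight_mul_eq (hq : IsMarkovJoint p b0 q) (hα : ∀ y, ∑ s, q s true y = w y * α y) :
    ∑ y, w y * α y = b0 := by
  simp only [← hα]
  rw [Finset.sum_comm, hq.sum_sum_eq]
  rfl

lemma condEnt2_eq (hq : IsMarkovJoint p b0 q) (hw : ∀ y, ∑ x, ∑ s, q s x y = w y)
    (hα : ∀ y, ∑ s, q s true y = w y * α y) :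
    condEnt2 (fun s y => ∑ x, q s x y) = ∑ y, w y * binEnt (binConv p (α y)) := by
  refine condEnt2_eq_sum_mul_binEnt (fun s y => Finset.sum_nonneg fun x _ => hq.nonneg s x y)
    (fun y => by rw [Finset.sum_comm]; exact hw y) (fun y => ?_)
  have hwy := hw y
  have hαy := hα y
  rw [Fintype.sum_bool] at hwy ⊢
  rw [hq.eq_bern_mul true true y, hq.eq_bern_mul true false y]
  simp only [bern, Bool.xor_self, Bool.xor_false, Bool.false_eq_true, if_false, if_true, binConv]
  linear_combination p * hwy + (1 - 2 * p) * hαy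

lemma mi2_eq (hq : IsMarkovJoint p b0 q) (hw : ∀ y, ∑ x, ∑ s, q s x y = w y)
    (hα : ∀ y, ∑ s, q s true y = w y * α y) :
    mi2 (fun x y => ∑ s, q s x y) = binEnt b0 - ∑ y, w y * binEnt (α y) := by
  have hm : ∀ x y, 0 ≤ ∑ s, q s x y := fun x y => Finset.sum_nonneg fun s _ => hq.nonneg s x y
  rw [mi2_eq_binEnt_sub_condEnt2 (t := b0) hm (by rw [Finset.sum_comm, hq.sum_sum_eq]; rfl)
    (by rw [Finset.sum_comm, hq.sum_sum_eq]; rfl), condEnt2_eq_sum_mul_binEnt hm hw hα]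

end IsMarkovJoint

lemma exists_weight_condProb {q : Bool → Bool → Bool → ℝ} (hq : ∀ s x y, 0 ≤ q s x y) :
    ∃ w α : Bool → ℝ, (∀ y, 0 ≤ w y) ∧ (∀ y, α y ∈ Icc (0 : ℝ) 1) ∧
      (∀ y, ∑ x, ∑ s, q s x y = w y) ∧ ∀ y, ∑ s, q s true y = w y * α y := by
  have hnum : ∀ y, 0 ≤ ∑ s, q s true y := fun y => Finset.sum_nonneg fun s _ => hq s true y
  have hle : ∀ y, ∑ s, q s true y ≤ ∑ x, ∑ s, q s x y := fun y =>
    Finset.single_le_sum (f := fun x => ∑ s, q s x y)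
      (fun x _ => Finset.sum_nonneg fun s _ => hq s x y) (Finset.mem_univ true)
  refine ⟨fun y => ∑ x, ∑ s, q s x y, fun y => (∑ s, q s true y) / ∑ x, ∑ s, q s x y,
    fun y => (hnum y).trans (hle y), fun y => ⟨div_nonneg (hnum y) ((hnum y).trans (hle y)),
      div_le_one_of_le₀ (hle y) ((hnum y).trans (hle y))⟩, fun y => rfl, fun y => ?_⟩
  rcases eq_or_ne (∑ x, ∑ s, q s x y) 0 with h | h
  · simp only [h, zero_mul]
    exact le_antisymm (h ▸ hle y) (hnum y)
  · exact (mul_div_cancel₀ _ h).symm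

lemma sum_distortion_eq {q : Bool → Bool → Bool → ℝ} {w α : Bool → ℝ}
    (hw : ∀ y, ∑ x, ∑ s, q s x y = w y)
    (hα : ∀ y, ∑ s, q s true y = w y * α y) :
    ∑ s, ∑ x, ∑ y, q s x y * (if x = y then 0 else 1)
      = w false * α false + w true * (1 - α true) := by
  have hwt := hw true
  have hαt := hα true
  have hαf := hα false
  simp only [Fintype.sum_bool] at hwt hαt hαf ⊢
  simp only [Bool.true_eq_false, Bool.false_eq_true, if_true, if_false]
  linarith

def rateRegion (p b0 D C : ℝ) : Set ℝ :=
  {r | ∃ q, IsMarkovJoint p b0 q ∧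
    (∑ s : Bool, ∑ x : Bool, ∑ xh : Bool, q s x xh * (if x = xh then 0 else 1)) ≤ D ∧
    condEnt2 (fun s xh => ∑ x : Bool, q s x xh) ≤ C ∧ r = mi2 (fun x xh => ∑ s : Bool, q s x xh)}

section rateRegion

variable {p b0 D C r : ℝ}

lemma nonneg_of_mem_rateRegion (hr : r ∈ rateRegion p b0 D C) : 0 ≤ r := by
  obtain ⟨q, hq, -, -, rfl⟩ := hr
  obtain ⟨w, α, hw₀, hα₀₁, hw, hα⟩ := exists_weight_condProb hq.nonneg
  rw [hq.mi2_eq hw hα, sub_nonneg, ← hq.sum_weight_mul_eq hα]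
  exact sum_mul_binEnt_le (fun y _ => hw₀ y) (hq.sum_weight_eq_one hw) (fun y _ => hα₀₁ y)

lemma binEnt_sub_binEnt_le_of_mem_rateRegion_distortion (hD : D ≤ 1 / 2)
    (hr : r ∈ rateRegion p b0 D C) : binEnt b0 - binEnt D ≤ r := by
  obtain ⟨q, hq, hqD, -, rfl⟩ := hr
  obtain ⟨w, α, hw₀, hα₀₁, hw, hα⟩ := exists_weight_condProb hq.nonneg
  rw [hq.mi2_eq hw hα, sub_le_sub_iff_left]
  rw [sum_distortion_eq hw hα] at hqD
  -- flipping the guess `X̂ = true` turns the mixture of the `α y` into the distortion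
  set α' : Bool → ℝ := fun y => if y then 1 - α y else α y
  have hα' : ∀ y, α' y ∈ Icc (0 : ℝ) 1 := fun y => by
    cases y <;> simp only [α', if_true, Bool.false_eq_true, if_false]
    exacts [hα₀₁ false, ⟨by linarith [(hα₀₁ true).2], by linarith [(hα₀₁ true).1]⟩]
  have hdist : ∑ y, w y * α' y = w false * α false + w true * (1 - α true) := by
    simp [α', add_comm]
  calc ∑ y, w y * binEnt (α y) = ∑ y, w y * binEnt (α' y) := by
        simp [α', binEnt_one_sub]
    _ ≤ binEnt (∑ y, w y * α' y) :=
        sum_mul_binEnt_le (fun y _ => hw₀ y) (hq.sum_weight_eq_one hw) (fun y _ => hα' y)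
    _ ≤ binEnt D := by
        have h0 : 0 ≤ ∑ y, w y * α' y := Finset.sum_nonneg fun y _ => mul_nonneg (hw₀ y) (hα' y).1
        rw [hdist] at h0 ⊢
        exact binEnt_strictMonoOn.monotoneOn ⟨h0, hqD.trans hD⟩ ⟨h0.trans hqD, hD⟩ hqD

lemma binEnt_sub_binEnt_le_of_mem_rateRegion_classification {c : ℝ} (hp₀ : 0 ≤ p)
    (hp : p < 1 / 2) (hc : c ∈ Icc (0 : ℝ) (1 / 2)) (hC : C ≤ binEnt (binConv p c))
    (hr : r ∈ rateRegion p b0 D C) : binEnt b0 - binEnt c ≤ r := by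
  obtain ⟨q, hq, -, hqC, rfl⟩ := hr
  obtain ⟨w, α, hw₀, hα₀₁, hw, hα⟩ := exists_weight_condProb hq.nonneg
  rw [hq.mi2_eq hw hα, sub_le_sub_iff_left]
  have h := (hq.condEnt2_eq hw hα ▸ hqC).trans hC
  have hlog : 0 < log 2 := log_pos one_lt_two
  rw [sum_mul_binEnt, binEnt_eq_binEntropy_div, div_le_div_iff_of_pos_right hlog] at h ⊢
  exact sum_mul_binEntropy_le_of_binConv hp₀ hp hw₀ (hq.sum_weight_eq_one hw) hα₀₁ hc h

/-- The test channel `X = X̂ ⊕ Bern d` with `X̂ ~ Bern β`, `β ⋆ d = b0`. -/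
lemma binEnt_sub_binEnt_mem_rateRegion {d : ℝ} (hp : p ∈ Icc (0 : ℝ) 1) (hd₀ : 0 ≤ d)
    (hdb : d ≤ b0) (hb0 : b0 ≤ 1 / 2) (hdD : d ≤ D) (hdC : binEnt (binConv p d) ≤ C) :
    binEnt b0 - binEnt d ∈ rateRegion p b0 D C := by
  obtain ⟨β, hβ, hβd⟩ : ∃ β ∈ Icc (0 : ℝ) 1, β * (1 - 2 * d) = b0 - d := by
    rcases (hdb.trans hb0).lt_or_eq with hd | rfl
    · refine ⟨(b0 - d) / (1 - 2 * d), ⟨by apply div_nonneg <;> linarith, ?_⟩,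
        div_mul_cancel₀ _ (by linarith)⟩
      rw [div_le_one (by linarith)]
      linarith
    · exact ⟨0, ⟨le_rfl, zero_le_one⟩, by linarith⟩
  set c : Bool → ℝ := fun y => if y then 1 - d else d
  have hc : ∀ y, c y ∈ Icc (0 : ℝ) 1 := fun y => by
    cases y <;> simp only [c, if_true, Bool.false_eq_true, if_false] <;> constructor <;> linarith
  set m : Bool → Bool → ℝ := fun x y => bern β y * bern (c y) x
  have hq := isMarkovJoint_bern_mul (b0 := b0) hp (m := m)
    (fun x y => mul_nonneg (bern_nonneg hβ y) (bern_nonneg (hc y) x))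
    (fun x => by cases x <;> simp [m, c, bern] <;> linarith)
  have hw : ∀ y, ∑ x, ∑ s, bern p (Bool.xor s x) * m x y = bern β y := fun y => by
    simp only [← Finset.sum_mul, sum_bern_xor, one_mul, m, ← Finset.mul_sum, sum_bern, mul_one]
  have hα : ∀ y, ∑ s, bern p (Bool.xor s true) * m true y = bern β y * c y := fun y => by
    rw [← Finset.sum_mul, sum_bern_xor, one_mul]
    simp [m, bern]
  refine ⟨_, hq, ?_, ?_, ?_⟩
  · rw [sum_distortion_eq hw hα]
    simp only [bern, c, if_true, Bool.false_eq_true, if_false]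
    linarith
  · rw [hq.condEnt2_eq hw hα]
    simpa [Fintype.sum_bool, bern, c, binConv_one_sub, binEnt_one_sub, ← add_mul] using hdC
  · rw [hq.mi2_eq hw hα]
    simp [bern, c, binEnt_one_sub, ← add_mul]

end rateRegion

theorem stmt1_general (a p₁ D C hinvC : ℝ)
    (ha : a ≤ 1 / 2) (hp0 : 0 ≤ p₁) (hp : p₁ < 1 / 2) (hpa : p₁ ≤ a)
    (hD0 : 0 ≤ D) (hC : binEnt p₁ ≤ C)
    (hinv_mem : hinvC ∈ Set.Icc (0 : ℝ) (1 / 2)) (hinv_eq : binEnt hinvC = C) :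
    let b0 : ℝ := (a - p₁) / (1 - 2 * p₁)
    let b : ℝ := min b0 (1 - b0)
    let C₁ : ℝ := (hinvC - p₁) / (1 - 2 * p₁)
    -- achievable rates: `I(X; X̂)` over all conditional distributions `p(x̂|x)`
    -- (equivalently, all joints `q` of `(S, X, X̂)` with `S - X - X̂` Markov and the given
    -- source) satisfying the distortion and classification constraints
    let feas : Set ℝ := {r | ∃ q : Bool → Bool → Bool → ℝ,
      (∀ s x xh, 0 ≤ q s x xh) ∧
      (∀ s x, ∑ xh : Bool, q s x xh = bern b0 x * bern p₁ (Bool.xor s x)) ∧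
      (∀ s x xh, q s x xh * (∑ s' : Bool, ∑ xh' : Bool, q s' x xh')
          = (∑ xh' : Bool, q s x xh') * (∑ s' : Bool, q s' x xh)) ∧
      (∑ s : Bool, ∑ x : Bool, ∑ xh : Bool,
          q s x xh * (if x = xh then 0 else 1)) ≤ D ∧
      condEnt2 (fun s xh => ∑ x : Bool, q s x xh) ≤ C ∧
      r = mi2 (fun x xh => ∑ s : Bool, q s x xh)}
    (C₁ ≤ D → C₁ ≤ b → sInf feas = binEnt b - binEnt C₁) ∧
    (D < C₁ → D ≤ b → sInf feas = binEnt b - binEnt D) ∧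
    (b < min D C₁ → sInf feas = 0) := by
  intro b0 b C₁ feas
  have hp₀₁ : p₁ ∈ Icc (0 : ℝ) 1 := ⟨hp0, by linarith⟩
  have hb0 : b0 ∈ Icc (0 : ℝ) (1 / 2) := sub_div_mem_Icc hp hpa ha
  have hpC : p₁ ≤ hinvC :=
    (binEnt_strictMonoOn.le_iff_le ⟨hp0, hp.le⟩ hinv_mem).1 (hinv_eq ▸ hC)
  have hC₁ : C₁ ∈ Icc (0 : ℝ) (1 / 2) := sub_div_mem_Icc hp hpC hinv_mem.2
  have hCC₁ : C = binEnt (binConv p₁ C₁) := by rw [← hinv_eq, binConv_sub_div (by linarith)]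
  have hfeas : feas = rateRegion p₁ b0 D C := by
    ext r
    exact ⟨fun ⟨q, h₀, h₁, h₂, h₃⟩ => ⟨q, ⟨h₀, h₁, h₂⟩, h₃⟩,
      fun ⟨q, ⟨h₀, h₁, h₂⟩, h₃⟩ => ⟨q, h₀, h₁, h₂, h₃⟩⟩
  rw [hfeas, show b = b0 from min_eq_left (by linarith [hb0.2])]
  refine ⟨fun hC₁D hC₁b => ?_, fun hDC₁ hDb => ?_, fun hbDC => ?_⟩
  · exact IsLeast.csInf_eq
      ⟨binEnt_sub_binEnt_mem_rateRegion hp₀₁ hC₁.1 hC₁b hb0.2 hC₁D hCC₁.ge,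
        fun r hr => binEnt_sub_binEnt_le_of_mem_rateRegion_classification hp0 hp hC₁ hCC₁.le hr⟩
  · exact IsLeast.csInf_eq
      ⟨binEnt_sub_binEnt_mem_rateRegion hp₀₁ hD0 hDb hb0.2 le_rfl
          (hCC₁ ▸ binEnt_binConv_le_binEnt_binConv hp0 hp hD0 hDC₁.le hC₁.2),
        fun r hr => binEnt_sub_binEnt_le_of_mem_rateRegion_distortion (hDb.trans hb0.2) hr⟩
  · rw [lt_min_iff] at hbDC
    have h := binEnt_sub_binEnt_mem_rateRegion hp₀₁ hb0.1 le_rfl hb0.2 hbDC.1.le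
      (hCC₁ ▸ binEnt_binConv_le_binEnt_binConv hp0 hp hb0.1 hbDC.2.le hC₁.2)
    rw [sub_self] at h
    exact IsLeast.csInf_eq ⟨h, fun r hr => nonneg_of_mem_rateRegion hr⟩

/-- closed form of the binary rate-distortion-classification function.
`hinvC = H⁻¹(C)` where `H⁻¹ : [0,1] → [0,1/2]` is the inverse of binary entropy. -/
theorem stmt1 (a p₁ D C hinvC : ℝ)
    (ha0 : 0 ≤ a) (ha : a ≤ 1 / 2) (hp0 : 0 ≤ p₁) (hp : p₁ < 1 / 2) (hpa : p₁ ≤ a)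
    (hD0 : 0 ≤ D) (hC : binEnt p₁ ≤ C)
    (hinv_mem : hinvC ∈ Set.Icc (0 : ℝ) (1 / 2)) (hinv_eq : binEnt hinvC = C) :
    let b0 : ℝ := (a - p₁) / (1 - 2 * p₁)
    let b : ℝ := min b0 (1 - b0)
    let C₁ : ℝ := (hinvC - p₁) / (1 - 2 * p₁)
    -- achievable rates: `I(X; X̂)` over all conditional distributions `p(x̂|x)`
    -- (equivalently, all joints `q` of `(S, X, X̂)` with `S - X - X̂` Markov and the given
    -- source) satisfying the distortion and classification constraints
    let feas : Set ℝ := {r | ∃ q : Bool → Bool → Bool → ℝ,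
      (∀ s x xh, 0 ≤ q s x xh) ∧
      (∀ s x, ∑ xh : Bool, q s x xh = bern b0 x * bern p₁ (Bool.xor s x)) ∧
      (∀ s x xh, q s x xh * (∑ s' : Bool, ∑ xh' : Bool, q s' x xh')
          = (∑ xh' : Bool, q s x xh') * (∑ s' : Bool, q s' x xh)) ∧
      (∑ s : Bool, ∑ x : Bool, ∑ xh : Bool,
          q s x xh * (if x = xh then 0 else 1)) ≤ D ∧
      condEnt2 (fun s xh => ∑ x : Bool, q s x xh) ≤ C ∧
      r = mi2 (fun x xh => ∑ s : Bool, q s x xh)}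
    (C₁ ≤ D → C₁ ≤ b → sInf feas = binEnt b - binEnt C₁) ∧
    (D < C₁ → D ≤ b → sInf feas = binEnt b - binEnt D) ∧
    (b < min D C₁ → sInf feas = 0) :=
  stmt1_general a p₁ D C hinvC ha hp0 hp hpa hD0 hC hinv_mem hinv_eq
end
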